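/- arXiv:1705.10636 — 8 statements merged into one kernel-verified Lean document; each statement's English description precedes it below -/
import Mathlib

section
/- Let u : ℤ → ℝ → ℝ be a family of differentiable functions (write uⱼ(t) := u(n+j, t)) satisfying for every n ∈ ℤ the lattice equation u' = (u·u₁+1)(u·u₋₁+1)(u₂−u₋₂). Define w(n,t) := u(n,t)·u(n+1,t). Then w satisfies w' = (w+1)( w₂(1/w₁+1)w − w(1/w₋₁+1)w₋₂ + w₁ − w₋₁ ), wherever w₁ and w₋₁ are nonzero. -/
/-!
By the product rule, w' = (w+1)((w₋₁+1)(w₁ − u₋₂u₁) + (w₁+1)(uu₃ − w₋₁)). The two products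
of non-neighbours are not functions of w alone, but u·u₃·w₁ = w·w₂, and shifting by −2,
u₋₂·u₁·w₋₁ = w₋₂·w; dividing by w₁ and w₋₁ turns the product rule into (wt).
-/

section LatticeSubstitution

variable {u w : ℤ → ℝ → ℝ}

theorem mul_add_three_mul_eq_mul_add_two
    (hw : ∀ (n : ℤ) (t : ℝ), w n t = u n t * u (n + 1) t) (n : ℤ) (t : ℝ) :
    u n t * u (n + 3) t * w (n + 1) t = w n t * w (n + 2) t := by
  simp only [hw]
  ring_nf

theorem hasDerivAt_of_eq_mul_succ
    (hu : ∀ (n : ℤ) (t : ℝ), HasDerivAt (u n)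
      ((u (n + 1) t * u n t + 1) * (u n t * u (n - 1) t + 1)
        * (u (n + 2) t - u (n - 2) t)) t)
    (hw : ∀ (n : ℤ) (t : ℝ), w n t = u n t * u (n + 1) t) (n : ℤ) (t : ℝ) :
    HasDerivAt (w n)
      ((w n t + 1) * ((w (n - 1) t + 1) * (w (n + 1) t - u (n - 2) t * u (n + 1) t)
        + (w (n + 1) t + 1) * (u n t * u (n + 3) t - w (n - 1) t))) t := by
  have hprod : HasDerivAt (fun s => u n s * u (n + 1) s) _ t := (hu n t).fun_mul (hu (n + 1) t)
  rw [← funext (hw n)] at hprod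
  convert hprod using 1
  simp only [hw]
  ring_nf

end LatticeSubstitution

/-- Substitution w = u·u₁ maps solutions of lattice equation (g),
u' = (u₁u+1)(uu₋₁+1)(u₂−u₋₂), to solutions of the universal equation (wt). -/
theorem stmt1 (u : ℤ → ℝ → ℝ)
    (hu : ∀ (n : ℤ) (t : ℝ), HasDerivAt (u n)
      ((u (n + 1) t * u n t + 1) * (u n t * u (n - 1) t + 1)
        * (u (n + 2) t - u (n - 2) t)) t)
    (w : ℤ → ℝ → ℝ) (hw : ∀ (n : ℤ) (t : ℝ), w n t = u n t * u (n + 1) t)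
    (n : ℤ) (t : ℝ) (h1 : w (n + 1) t ≠ 0) (hm1 : w (n - 1) t ≠ 0) :
    HasDerivAt (w n)
      ((w n t + 1) * (w (n + 2) t * (1 / w (n + 1) t + 1) * w n t
        - w n t * (1 / w (n - 1) t + 1) * w (n - 2) t
        + w (n + 1) t - w (n - 1) t)) t := by
  have right := mul_add_three_mul_eq_mul_add_two hw n t
  have left := mul_add_three_mul_eq_mul_add_two hw (n - 2) t
  rw [show n - 2 + 3 = n + 1 by ring, show n - 2 + 1 = n - 1 by ring,
    show n - 2 + 2 = n by ring] at left
  convert hasDerivAt_of_eq_mul_succ hu hw n t using 2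
  field_simp
  linear_combination (w (n - 1) t + 1) * w (n + 1) t * left
    - (w (n + 1) t + 1) * w (n - 1) t * right
end

section
/- Let u : ℤ → ℝ → ℝ be differentiable in t and nonvanishing, satisfying at every site the lattice equation u' = u·(1−u/u₂)(1−u₋₁/u)/(1−u/u₁) + u·(1−u₋₂/u)(1−u/u₁)/(1−u₋₁/u) (with all denominators nonzero). Define w(n,t) := u(n,t)/u(n+1,t) − 1. Then w satisfies w' = (w+1)( w₂(1/w₁+1)w − w(1/w₋₁+1)w₋₂ + w₁ − w₋₁ ). -/
/-! In terms of `w = u/u₁ - 1`, equation (f) says that the logarithmic derivative `u'/u` at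
site `n` is a rational function `logRate w n` of `w₋₂, w₋₁, w, w₁`. Hence
`w' = (w + 1) (logRate w n - logRate w (n + 1))`, and in this difference the terms with
denominator `w` cancel, leaving the right side of (wt). -/

theorem HasDerivAt.div_of_logDeriv {𝕜 : Type*} [NontriviallyNormedField 𝕜] {f g : 𝕜 → 𝕜}
    {a b x : 𝕜} (hf : HasDerivAt f (f x * a) x) (hg : HasDerivAt g (g x * b) x)
    (hgx : g x ≠ 0) : HasDerivAt (fun y => f y / g y) (f x / g x * (a - b)) x :=
  (hf.div hg hgx).congr_deriv (by field_simp)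

noncomputable def logRate (w : ℤ → ℝ) (n : ℤ) : ℝ :=
  -w (n - 1) * (1 + w (n + 1) + w (n + 1) / w n) - w n * (1 + w (n - 2) + w (n - 2) / w (n - 1))

theorem lattice_rhs_eq_mul_logRate (v : ℤ → ℝ) (hv : ∀ m, v m ≠ 0) (n : ℤ)
    (h0 : 1 - v n / v (n + 1) ≠ 0) (h1 : 1 - v (n - 1) / v n ≠ 0) :
    v n * (1 - v n / v (n + 2)) * (1 - v (n - 1) / v n) / (1 - v n / v (n + 1))
        + v n * (1 - v (n - 2) / v n) * (1 - v n / v (n + 1)) / (1 - v (n - 1) / v n)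
      = v n * logRate (fun m => v m / v (m + 1) - 1) n := by
  have e1 : n + 1 + 1 = n + 2 := by ring
  have e2 : n - 1 + 1 = n := by ring
  have e3 : n - 2 + 1 = n - 1 := by ring
  simp only [logRate, e1, e2, e3]
  rw [one_sub_div (hv _), div_ne_zero_iff] at h0 h1
  obtain ⟨hsub0, hvn1⟩ := h0
  obtain ⟨hsub1, hvn⟩ := h1
  have hsub0' : v n - v (n + 1) ≠ 0 := sub_ne_zero.2 (sub_ne_zero.1 hsub0).symm
  have hsub1' : v (n - 1) - v n ≠ 0 := sub_ne_zero.2 (sub_ne_zero.1 hsub1).symm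
  have hvn2 := hv (n + 2)
  have hvm1 := hv (n - 1)
  field_simp
  ring

theorem logRate_sub_logRate_add_one (w : ℤ → ℝ) (n : ℤ) :
    logRate w n - logRate w (n + 1)
      = w (n + 2) * (1 / w (n + 1) + 1) * w n - w n * (1 / w (n - 1) + 1) * w (n - 2)
        + w (n + 1) - w (n - 1) := by
  have e1 : n + 1 + 1 = n + 2 := by ring
  have e2 : n + 1 - 1 = n := by ring
  have e3 : n + 1 - 2 = n - 1 := by ring
  simp only [logRate, e1, e2, e3]
  ring

theorem stmt2_general (u : ℤ → ℝ → ℝ)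
    (hne : ∀ (n : ℤ) (t : ℝ), u n t ≠ 0)
    (hd1 : ∀ (n : ℤ) (t : ℝ), 1 - u n t / u (n + 1) t ≠ 0)
    (hd2 : ∀ (n : ℤ) (t : ℝ), 1 - u (n - 1) t / u n t ≠ 0)
    (hu : ∀ (n : ℤ) (t : ℝ), HasDerivAt (u n)
      (u n t * (1 - u n t / u (n + 2) t) * (1 - u (n - 1) t / u n t)
          / (1 - u n t / u (n + 1) t)
        + u n t * (1 - u (n - 2) t / u n t) * (1 - u n t / u (n + 1) t)
          / (1 - u (n - 1) t / u n t)) t)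
    (w : ℤ → ℝ → ℝ) (hw : ∀ (n : ℤ) (t : ℝ), w n t = u n t / u (n + 1) t - 1)
    (n : ℤ) (t : ℝ) :
    HasDerivAt (w n)
      ((w n t + 1) * (w (n + 2) t * (1 / w (n + 1) t + 1) * w n t
        - w n t * (1 / w (n - 1) t + 1) * w (n - 2) t
        + w (n + 1) t - w (n - 1) t)) t := by
  have hwt : (fun m => u m t / u (m + 1) t - 1) = fun m => w m t := funext fun m => (hw m t).symm
  have hlog : ∀ m, HasDerivAt (u m) (u m t * logRate (fun k => w k t) m) t := fun m => by
    rw [← hwt, ← lattice_rhs_eq_mul_logRate (u · t) (hne · t) m (hd1 m t) (hd2 m t)]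
    exact hu m t
  have hdiv := ((hlog n).div_of_logDeriv (hlog (n + 1)) (hne (n + 1) t)).sub_const 1
  have hwn : (fun s => u n s / u (n + 1) s - 1) = w n := funext fun s => (hw n s).symm
  rw [logRate_sub_logRate_add_one, hwn] at hdiv
  exact hdiv.congr_deriv (by rw [hw n t, sub_add_cancel])

/-- Substitution w = u/u₁ − 1 maps solutions of lattice equation (f) to solutions
of the universal equation (wt). -/
theorem stmt2 (u : ℤ → ℝ → ℝ)
    (hne : ∀ (n : ℤ) (t : ℝ), u n t ≠ 0)
    (hd1 : ∀ (n : ℤ) (t : ℝ), 1 - u n t / u (n + 1) t ≠ 0)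
    (hd2 : ∀ (n : ℤ) (t : ℝ), 1 - u (n - 1) t / u n t ≠ 0)
    (hu : ∀ (n : ℤ) (t : ℝ), HasDerivAt (u n)
      (u n t * (1 - u n t / u (n + 2) t) * (1 - u (n - 1) t / u n t)
          / (1 - u n t / u (n + 1) t)
        + u n t * (1 - u (n - 2) t / u n t) * (1 - u n t / u (n + 1) t)
          / (1 - u (n - 1) t / u n t)) t)
    (w : ℤ → ℝ → ℝ) (hw : ∀ (n : ℤ) (t : ℝ), w n t = u n t / u (n + 1) t - 1)
    (n : ℤ) (t : ℝ) (h1 : w (n + 1) t ≠ 0) (hm1 : w (n - 1) t ≠ 0) :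
    HasDerivAt (w n)
      ((w n t + 1) * (w (n + 2) t * (1 / w (n + 1) t + 1) * w n t
        - w n t * (1 / w (n - 1) t + 1) * w (n - 2) t
        + w (n + 1) t - w (n - 1) t)) t :=
  stmt2_general u hne hd1 hd2 hu w hw n t
end

section
/- Let H(x,y) := (y−x)² and P(a,b,c,d) := (d+b)(c+a)/2 − a·c − b·d. Then for all real u₋₂,u₋₁,u,u₁,u₂ for which both denominators are nonzero, the identity 2·[ 1/( 2/(u₂−u) + 1/(u−u₁) + 1/(u−u₋₁) ) − 1/( 2/(u₋₂−u) + 1/(u−u₁) + 1/(u−u₋₁) ) ] = H(u₋₁,u)·H(u,u₁)·(u₂−u₋₂) / ( P(u₋₂,u₋₁,u,u₁)·P(u₋₁,u,u₁,u₂) ) holds. -/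
/-- Factorization of the right-hand side of lattice equation (a) into the standard
form H·H·(u₂−u₋₂)/(P·P) with H(x,y)=(y−x)² and
P(a,b,c,d) = (d+b)(c+a)/2 − ac − bd. -/
theorem stmt4 (H : ℝ → ℝ → ℝ) (P : ℝ → ℝ → ℝ → ℝ → ℝ)
    (hH : ∀ x y, H x y = (y - x) ^ 2)
    (hP : ∀ a b c d, P a b c d = (d + b) * (c + a) / 2 - a * c - b * d)
    (um2 um1 u u1 u2 : ℝ)
    (h2 : u2 - u ≠ 0) (hm2 : um2 - u ≠ 0) (h1 : u - u1 ≠ 0) (hm1 : u - um1 ≠ 0)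
    (hS1 : 2 / (u2 - u) + 1 / (u - u1) + 1 / (u - um1) ≠ 0)
    (hS2 : 2 / (um2 - u) + 1 / (u - u1) + 1 / (u - um1) ≠ 0)
    (hP1 : P um2 um1 u u1 ≠ 0) (hP2 : P um1 u u1 u2 ≠ 0) :
    2 * (1 / (2 / (u2 - u) + 1 / (u - u1) + 1 / (u - um1))
        - 1 / (2 / (um2 - u) + 1 / (u - u1) + 1 / (u - um1)))
      = H um1 u * H u u1 * (u2 - um2) / (P um2 um1 u u1 * P um1 u u1 u2) := by
  have e1 : 1 / (2 / (u2 - u) + 1 / (u - u1) + 1 / (u - um1))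
      = (u2 - u) * ((u - u1) * (u - um1)) / (-2 * P um1 u u1 u2) := by
    rw [show 2 / (u2 - u) + 1 / (u - u1) + 1 / (u - um1)
        = -2 * P um1 u u1 u2 / ((u2 - u) * ((u - u1) * (u - um1))) by
      rw [hP]; field_simp; ring]
    rw [one_div_div]
  have e2 : 1 / (2 / (um2 - u) + 1 / (u - u1) + 1 / (u - um1))
      = (um2 - u) * ((u - u1) * (u - um1)) / (-2 * P um2 um1 u u1) := by
    rw [show 2 / (um2 - u) + 1 / (u - u1) + 1 / (u - um1)
        = -2 * P um2 um1 u u1 / ((um2 - u) * ((u - u1) * (u - um1))) by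
      rw [hP]; field_simp; ring]
    rw [one_div_div]
  rw [e1, e2, hH, hH]
  field_simp
  rw [hP, hP]
  ring
end

section
/- Let P(u₋₁,u,u₁,u₂) be a polynomial over a field of characteristic 0 that is affine-linear in each of its four arguments. Then P satisfies the symmetry relations P(u₋₁,u,u₁,u₂) = P(u₂,u₁,u,u₋₁) = P(u₁,u,u₋₁,u₂) if and only if there exist constants a₀,a₁,a₂,a₃,a₄,b₂ such that P = a₄·u₋₁uu₁u₂ + a₃·(u₋₁uu₁+u₋₁uu₂+u₋₁u₁u₂+uu₁u₂) + a₂·(u₋₁+u₁)(u+u₂) + b₂·(u₋₁u₁+uu₂) + a₁·(u₋₁+u+u₁+u₂) + a₀. -/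
/-!
An affine-linear polynomial is `∑ S, c S * ∏ i ∈ S, X i`, the sum running over the subsets `S`
of the variables, and renaming the variables by a permutation `e` replaces `c S` by
`c (e⁻¹ S)`. So `P` is invariant under the symmetries of the square exactly when `c` is constant
on the orbits of the dihedral group on subsets of the vertices. There are six orbits: the empty
set, the vertices, the edges `{0,1}, {1,2}, {2,3}, {3,0}`, the diagonals `{0,2}, {1,3}`, the
triples and the whole square, one for each coefficient of the canonical form.
-/

open MvPolynomial

namespace Finsupp

variable {σ : Type*}

lemma finsetSum_single_one_apply [DecidableEq σ] (s : Finset σ) (j : σ) :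
    (∑ i ∈ s, single i 1 : σ →₀ ℕ) j = if j ∈ s then 1 else 0 := by
  simp only [finsetSum_apply, single_apply, Finset.sum_ite_eq']

lemma finsetSum_single_one_injective :
    Function.Injective fun s : Finset σ ↦ (∑ i ∈ s, single i 1 : σ →₀ ℕ) := by
  classical
  intro s t hst
  ext j
  have := DFunLike.congr_fun hst j
  simp only [finsetSum_single_one_apply] at this
  split_ifs at this <;> simp_all

lemma sum_support_single_one_of_le_one {m : σ →₀ ℕ} (hm : ∀ i, m i ≤ 1) :
    ∑ i ∈ m.support, single i 1 = m := by
  conv_rhs => rw [← sum_single m]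
  refine Finset.sum_congr rfl fun i hi ↦ ?_
  rw [le_antisymm (hm i) (Nat.one_le_iff_ne_zero.2 (mem_support_iff.1 hi))]

end Finsupp

namespace MvPolynomial

variable {σ R : Type*} [CommSemiring R]

lemma monomial_sum_single_one (s : Finset σ) (a : R) :
    monomial (∑ i ∈ s, Finsupp.single i 1) a = C a * ∏ i ∈ s, X i :=
  monomial_sum_index s _ a

lemma eq_sum_C_mul_prod_X_of_degreeOf_le_one [Fintype σ] {P : MvPolynomial σ R}
    (hP : ∀ i, P.degreeOf i ≤ 1) :
    P = ∑ s : Finset σ, C (coeff (∑ i ∈ s, Finsupp.single i 1) P) * ∏ i ∈ s, X i := by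
  classical
  simp_rw [← monomial_sum_single_one]
  rw [← Finset.sum_image (f := fun m ↦ monomial m (coeff m P))
    Finsupp.finsetSum_single_one_injective.injOn]
  conv_lhs => rw [P.as_sum]
  refine Finset.sum_subset (fun m hm ↦ ?_) (fun m _ hm ↦ ?_)
  · have := Finsupp.sum_support_single_one_of_le_one fun i ↦ degreeOf_le_iff.1 (hP i) m hm
    exact Finset.mem_image.2 ⟨m.support, Finset.mem_univ _, this⟩
  · rw [notMem_support_iff.1 hm, map_zero]

lemma coeff_sum_single_one_image_of_rename_eq [DecidableEq σ] {P : MvPolynomial σ R}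
    {e : σ → σ} (he : Function.Injective e) (h : rename e P = P) (s : Finset σ) :
    coeff (∑ i ∈ s.image e, Finsupp.single i 1) P = coeff (∑ i ∈ s, Finsupp.single i 1) P := by
  conv_lhs => rw [← h]
  rw [Finset.sum_image he.injOn, ← coeff_rename_mapDomain e he P]
  simp only [Finsupp.mapDomain_finsetSum, Finsupp.mapDomain_single]

end MvPolynomial

lemma Finset.sum_finset_fin_four {M : Type*} [AddCommMonoid M] (f : Finset (Fin 4) → M) :
    ∑ s, f s = f ∅ + f {0} + f {1} + f {2} + f {3} + f {0, 1} + f {0, 2} + f {0, 3} + f {1, 2}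
      + f {1, 3} + f {2, 3} + f {0, 1, 2} + f {0, 1, 3} + f {0, 2, 3} + f {1, 2, 3}
      + f {0, 1, 2, 3} := by
  rw [← powerset_univ,
    show (univ : Finset (Fin 4)) = insert 0 (insert 1 (insert 2 (insert 3 ∅))) from rfl]
  simp (disch := decide) only [sum_powerset_insert, powerset_empty, sum_singleton]
  simp only [insert_empty]
  abel

section Square

variable {R : Type*} [CommSemiring R]

noncomputable def squareSymmetricForm (a0 a1 a2 a3 a4 b2 : R) : MvPolynomial (Fin 4) R :=
  C a4 * (X 0 * X 1 * X 2 * X 3)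
    + C a3 * (X 0 * X 1 * X 2 + X 0 * X 1 * X 3 + X 0 * X 2 * X 3 + X 1 * X 2 * X 3)
    + C a2 * ((X 0 + X 2) * (X 1 + X 3))
    + C b2 * (X 0 * X 2 + X 1 * X 3)
    + C a1 * (X 0 + X 1 + X 2 + X 3)
    + C a0

lemma rename_squareSymmetricForm (a0 a1 a2 a3 a4 b2 : R) :
    rename ![3, 2, 1, 0] (squareSymmetricForm a0 a1 a2 a3 a4 b2) =
        squareSymmetricForm a0 a1 a2 a3 a4 b2 ∧
      rename ![2, 1, 0, 3] (squareSymmetricForm a0 a1 a2 a3 a4 b2) =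
        squareSymmetricForm a0 a1 a2 a3 a4 b2 := by
  constructor <;>
  · simp only [squareSymmetricForm, map_add, map_mul, rename_C, rename_X, Matrix.cons_val_zero,
      Matrix.cons_val_one, Matrix.cons_val]
    ring

lemma sum_C_mul_prod_X_eq_squareSymmetricForm {c : Finset (Fin 4) → R}
    (hr : ∀ s, c (s.image ![3, 2, 1, 0]) = c s) (hs : ∀ s, c (s.image ![2, 1, 0, 3]) = c s) :
    ∑ s, C (c s) * ∏ i ∈ s, X i =
      squareSymmetricForm (c ∅) (c {0}) (c {0, 1}) (c {0, 1, 2}) (c {0, 1, 2, 3}) (c {0, 2}) := by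
  have hr' (s t : Finset (Fin 4)) (hst : s.image ![3, 2, 1, 0] = t) : c t = c s := hst ▸ hr s
  have hs' (s t : Finset (Fin 4)) (hst : s.image ![2, 1, 0, 3] = t) : c t = c s := hst ▸ hs s
  have h2 := hs' {0} {2} (by decide)
  have h1 := (hr' {2} {1} (by decide)).trans h2
  have h3 := hr' {0} {3} (by decide)
  have h23 := hr' {0, 1} {2, 3} (by decide)
  have h12 := hs' {0, 1} {1, 2} (by decide)
  have h03 := (hs' {2, 3} {0, 3} (by decide)).trans h23
  have h13 := hr' {0, 2} {1, 3} (by decide)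
  have h123 := hr' {0, 1, 2} {1, 2, 3} (by decide)
  have h013 := (hs' {1, 2, 3} {0, 1, 3} (by decide)).trans h123
  have h023 := (hr' {0, 1, 3} {0, 2, 3} (by decide)).trans h013
  rw [Finset.sum_finset_fin_four]
  simp only [h1, h2, h3, h12, h13, h23, h03, h013, h023, h123]
  simp (disch := decide) only [Finset.prod_insert, Finset.prod_singleton, Finset.prod_empty]
  rw [squareSymmetricForm]
  ring

end Square

theorem stmt6_general {K : Type*} [Field K]
    (P : MvPolynomial (Fin 4) K) (hlin : ∀ i, P.degreeOf i ≤ 1) :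
    (rename (![3, 2, 1, 0] : Fin 4 → Fin 4) P = P ∧
      rename (![2, 1, 0, 3] : Fin 4 → Fin 4) P = P) ↔
    ∃ a0 a1 a2 a3 a4 b2 : K,
      P = C a4 * (X 0 * X 1 * X 2 * X 3)
        + C a3 * (X 0 * X 1 * X 2 + X 0 * X 1 * X 3 + X 0 * X 2 * X 3
            + X 1 * X 2 * X 3)
        + C a2 * ((X 0 + X 2) * (X 1 + X 3))
        + C b2 * (X 0 * X 2 + X 1 * X 3)
        + C a1 * (X 0 + X 1 + X 2 + X 3)
        + C a0 := by
  constructor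
  · rintro ⟨hr, hs⟩
    exact ⟨_, _, _, _, _, _, (eq_sum_C_mul_prod_X_of_degreeOf_le_one hlin).trans
      (sum_C_mul_prod_X_eq_squareSymmetricForm
        (coeff_sum_single_one_image_of_rename_eq (by decide) hr)
        (coeff_sum_single_one_image_of_rename_eq (by decide) hs))⟩
  · rintro ⟨a0, a1, a2, a3, a4, b2, rfl⟩
    exact rename_squareSymmetricForm a0 a1 a2 a3 a4 b2

/-- An affine-linear polynomial in four variables (vertices u₋₁ = X 0, u = X 1,
u₁ = X 2, u₂ = X 3 of a square) has the symmetry group of the square iff it is of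
the canonical form with six coefficients. -/
theorem stmt6 {K : Type*} [Field K] [CharZero K]
    (P : MvPolynomial (Fin 4) K) (hlin : ∀ i, P.degreeOf i ≤ 1) :
    (rename (![3, 2, 1, 0] : Fin 4 → Fin 4) P = P ∧
      rename (![2, 1, 0, 3] : Fin 4 → Fin 4) P = P) ↔
    ∃ a0 a1 a2 a3 a4 b2 : K,
      P = C a4 * (X 0 * X 1 * X 2 * X 3)
        + C a3 * (X 0 * X 1 * X 2 + X 0 * X 1 * X 3 + X 0 * X 2 * X 3
            + X 1 * X 2 * X 3)
        + C a2 * ((X 0 + X 2) * (X 1 + X 3))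
        + C b2 * (X 0 * X 2 + X 1 * X 3)
        + C a1 * (X 0 + X 1 + X 2 + X 3)
        + C a0 :=
  stmt6_general P hlin
end

section
/- Let γ be a parameter and define P(u₋₁,u,u₁,u₂) := (u₂+u)(u₁−u₋₁)/2 − u₂u − u₁u₋₁ − γ²(u₋₁+u+u₁+u₂) + 3γ⁴ and H(u,u₁) := (u₁−u)² − 2γ²(u₁+u) + γ⁴. Then there is a nonzero constant k such that k·H(u,u₁) = (∂P/∂u₋₁)(∂P/∂u₂) − (∂²P/∂u₋₁∂u₂)·P identically in all four variables, and P satisfies P(u₋₁,u,u₁,u₂)=P(u₂,u₁,u,u₋₁)=P(u₁,u,u₋₁,u₂). -/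
open MvPolynomial

section QutRat

variable {K : Type*} [Field K]

/-- Variables: `u₋₁ = X 0`, `u = X 1`, `u₁ = X 2`, `u₂ = X 3`. -/
noncomputable def qutRatP (γ : K) : MvPolynomial (Fin 4) K :=
  C (1 / 2) * (X 3 + X 1) * (X 2 + X 0) - X 3 * X 1 - X 2 * X 0
    - C (γ ^ 2) * (X 0 + X 1 + X 2 + X 3) + C (3 * γ ^ 4)

noncomputable def qutRatH (γ : K) : MvPolynomial (Fin 4) K :=
  (X 2 - X 1) ^ 2 - C (2 * γ ^ 2) * (X 2 + X 1) + C (γ ^ 4)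

theorem pderiv_zero_qutRatP (γ : K) :
    pderiv 0 (qutRatP γ) = C (1 / 2) * (X 3 + X 1) - X 2 - C (γ ^ 2) := by
  simp [qutRatP]

theorem pderiv_three_qutRatP (γ : K) :
    pderiv 3 (qutRatP γ) = C (1 / 2) * (X 2 + X 0) - X 1 - C (γ ^ 2) := by
  simp [qutRatP]
  ring

theorem pderiv_zero_pderiv_three_qutRatP (γ : K) :
    pderiv 0 (pderiv 3 (qutRatP γ)) = C (1 / 2) := by
  simp [pderiv_three_qutRatP]

theorem pderiv_mul_pderiv_sub_qutRatP (γ : K) (h2 : (2 : K) ≠ 0) :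
    pderiv 0 (qutRatP γ) * pderiv 3 (qutRatP γ) - pderiv 0 (pderiv 3 (qutRatP γ)) * qutRatP γ
      = C (-1 / 2) * qutRatH γ := by
  have two_mul_half : (2 : MvPolynomial (Fin 4) K) * C (1 / 2) = 1 := by
    rw [← map_ofNat C, ← C_mul, mul_one_div_cancel h2, C_1]
  rw [pderiv_zero_pderiv_three_qutRatP, pderiv_zero_qutRatP, pderiv_three_qutRatP, qutRatP,
    qutRatH]
  simp only [map_mul, map_pow, map_ofNat, neg_div, map_neg]
  -- the two sides differ by `(1 - 2 * C (1 / 2)) * (X 1 + γ²) * (X 2 + γ²)`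
  linear_combination -((X 1 + C γ ^ 2) * (X 2 + C γ ^ 2)) * two_mul_half

theorem rename_reverse_qutRatP (γ : K) : rename ![3, 2, 1, 0] (qutRatP γ) = qutRatP γ := by
  simp only [qutRatP, map_add, map_sub, map_mul, rename_C, rename_X, Matrix.cons_val,
    Matrix.cons_val_one, Matrix.cons_val_zero]
  ring

theorem rename_swap_qutRatP (γ : K) : rename ![2, 1, 0, 3] (qutRatP γ) = qutRatP γ := by
  simp only [qutRatP, map_add, map_sub, map_mul, rename_C, rename_X, Matrix.cons_val,
    Matrix.cons_val_one, Matrix.cons_val_zero]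
  ring

end QutRat

/-- The rational-case polynomials (Qut-rat), in the symmetrized form
P = (u₂+u)(u₁+u₋₁)/2 − u₂u − u₁u₋₁ − γ²(u₋₁+u+u₁+u₂) + 3γ⁴,
H = (u₁−u)² − 2γ²(u₁+u) + γ⁴: P has the square symmetries and
const·H = ∂₋₁(P)·∂₂(P) − ∂₋₁∂₂(P)·P.  Variables: u₋₁ = X 0, u = X 1,
u₁ = X 2, u₂ = X 3. -/
theorem stmt8 (γ : ℝ) (P H : MvPolynomial (Fin 4) ℝ)
    (hP : P = C (1 / 2) * (X 3 + X 1) * (X 2 + X 0) - X 3 * X 1 - X 2 * X 0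
        - C (γ ^ 2) * (X 0 + X 1 + X 2 + X 3) + C (3 * γ ^ 4))
    (hH : H = (X 2 - X 1) ^ 2 - C (2 * γ ^ 2) * (X 2 + X 1) + C (γ ^ 4)) :
    (∃ k : ℝ, k ≠ 0 ∧
      C k * H = pderiv 0 P * pderiv 3 P - pderiv 0 (pderiv 3 P) * P) ∧
    rename (![3, 2, 1, 0] : Fin 4 → Fin 4) P = P ∧
    rename (![2, 1, 0, 3] : Fin 4 → Fin 4) P = P := by
  obtain rfl : P = qutRatP γ := hP
  obtain rfl : H = qutRatH γ := hH
  exact ⟨⟨-1 / 2, by norm_num, (pderiv_mul_pderiv_sub_qutRatP γ two_ne_zero).symm⟩,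
    rename_reverse_qutRatP γ, rename_swap_qutRatP γ⟩
end

section
/- With X := (u₁−u)(u₋₁−u₋₂)/((u₁−u₋₁)(u−u₋₂)), X₁ := (u₂−u₁)(u−u₋₁)/((u₂−u)(u₁−u₋₁)), and Y := (u₁−u)(u−u₋₁)/(u₁−u₋₁), the right-hand side of lattice equation (a), namely 2[ 1/(2/(u₂−u)+1/(u−u₁)+1/(u−u₋₁)) − 1/(2/(u₋₂−u)+1/(u−u₁)+1/(u−u₋₁)) ], equals 4Y(1−X−X₁)/((2X−1)(2X₁−1)) as rational functions, wherever all denominators are nonzero. -/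
/-!
For any `a`, put `Z a := 2 * crossRatio a u₁ u u₋₁ - 1`. Then
`1 / (2/(a-u) + 1/(u-u₁) + 1/(u-u₋₁)) = -Y / Z a`: both sides equal `(a-u)(u-u₁)(u-u₋₁)` divided by
the quadratic polynomial `(a-u)(u₁-u₋₁) Z a`. Now `2X₁ - 1 = Z u₂`, while the reflection `u_k ↦ u_{-k}`
turns `X₁` into `X` and `Y` into `-Y`, so the two terms on the left are `-Y/(2X₁-1)` and `Y/(2X-1)`.
-/

def crossRatio {K : Type*} [Field K] (a b c d : K) : K :=
  (a - b) * (c - d) / ((a - c) * (b - d))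

theorem one_div_two_div_add_one_div_add_one_div_eq_div_crossRatio {K : Type*} [Field K]
    {a b c d : K} (hac : a - c ≠ 0) (hcb : c - b ≠ 0) (hcd : c - d ≠ 0) (hbd : b - d ≠ 0) :
    1 / (2 / (a - c) + 1 / (c - b) + 1 / (c - d))
      = -((b - c) * (c - d) / (b - d)) / (2 * crossRatio a b c d - 1) := by
  set N := 2 * (c - b) * (c - d) + (a - c) * (c - d) + (a - c) * (c - b)
  have hsum : 2 / (a - c) + 1 / (c - b) + 1 / (c - d) = N / ((a - c) * (c - b) * (c - d)) := by
    field_simp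
    ring
  have hcr : 2 * crossRatio a b c d - 1 = N / ((a - c) * (b - d)) := by
    have hcb' : b - c ≠ 0 := sub_ne_zero.2 (sub_ne_zero.1 hcb).symm
    unfold crossRatio
    field_simp
    ring
  rw [hsum, hcr, one_div_div, div_div_eq_mul_div]
  congr 1
  field_simp
  ring

theorem stmt11_general (um2 um1 u u1 u2 X X1 Y : ℝ)
    (hX : X = (u1 - u) * (um1 - um2) / ((u1 - um1) * (u - um2)))
    (hX1 : X1 = (u2 - u1) * (u - um1) / ((u2 - u) * (u1 - um1)))
    (hY : Y = (u1 - u) * (u - um1) / (u1 - um1))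
    (h2 : u2 - u ≠ 0) (hm2 : um2 - u ≠ 0) (h1 : u - u1 ≠ 0) (hm1 : u - um1 ≠ 0)
    (h11 : u1 - um1 ≠ 0)
    (hX' : 2 * X - 1 ≠ 0) (hX1' : 2 * X1 - 1 ≠ 0) :
    2 * (1 / (2 / (u2 - u) + 1 / (u - u1) + 1 / (u - um1))
        - 1 / (2 / (um2 - u) + 1 / (u - u1) + 1 / (u - um1)))
      = 4 * Y * (1 - X - X1) / ((2 * X - 1) * (2 * X1 - 1)) := by
  have hright : 1 / (2 / (u2 - u) + 1 / (u - u1) + 1 / (u - um1)) = -Y / (2 * X1 - 1) := by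
    rw [one_div_two_div_add_one_div_add_one_div_eq_div_crossRatio h2 h1 hm1 h11, hY, hX1,
      crossRatio]
  have hleft : 1 / (2 / (um2 - u) + 1 / (u - u1) + 1 / (u - um1)) = Y / (2 * X - 1) := by
    have h11' : um1 - u1 ≠ 0 := sub_ne_zero.2 (sub_ne_zero.1 h11).symm
    have hX_refl : X = crossRatio um2 um1 u u1 := by
      rw [hX, crossRatio, ← neg_sub u um2, ← neg_sub u1 um1]
      ring
    rw [add_assoc, add_comm (1 / (u - u1)), ← add_assoc,
      one_div_two_div_add_one_div_add_one_div_eq_div_crossRatio hm2 hm1 h1 h11', ← hX_refl, hY]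
    field_simp
    ring
  rw [hright, hleft]
  field_simp
  ring

/-- Expression of lattice equation (a) through the Möbius invariants X, X₁, Y:
the right-hand side equals 4Y(1−X−X₁)/((2X−1)(2X₁−1)). -/
theorem stmt11 (um2 um1 u u1 u2 X X1 Y : ℝ)
    (hX : X = (u1 - u) * (um1 - um2) / ((u1 - um1) * (u - um2)))
    (hX1 : X1 = (u2 - u1) * (u - um1) / ((u2 - u) * (u1 - um1)))
    (hY : Y = (u1 - u) * (u - um1) / (u1 - um1))
    (h2 : u2 - u ≠ 0) (hm2 : um2 - u ≠ 0) (h1 : u - u1 ≠ 0) (hm1 : u - um1 ≠ 0)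
    (h11 : u1 - um1 ≠ 0) (h02 : u - um2 ≠ 0)
    (hS1 : 2 / (u2 - u) + 1 / (u - u1) + 1 / (u - um1) ≠ 0)
    (hS2 : 2 / (um2 - u) + 1 / (u - u1) + 1 / (u - um1) ≠ 0)
    (hX' : 2 * X - 1 ≠ 0) (hX1' : 2 * X1 - 1 ≠ 0) :
    2 * (1 / (2 / (u2 - u) + 1 / (u - u1) + 1 / (u - um1))
        - 1 / (2 / (um2 - u) + 1 / (u - u1) + 1 / (u - um1)))
      = 4 * Y * (1 - X - X1) / ((2 * X - 1) * (2 * X1 - 1)) :=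
  stmt11_general um2 um1 u u1 u2 X X1 Y hX hX1 hY h2 hm2 h1 hm1 h11 hX' hX1'
end

section
/- Let u : ℤ → ℝ → ℝ be differentiable in t and satisfy at every site the equation u' = (u₂−u₋₂) / ( (1+(u₂+u)(u₁+u₋₁)) (1+(u₁+u₋₁)(u+u₋₂)) ), with all denominators nonzero. Define w(n,t) := 1/(1+(u₃+u₁)(u₂+u)) − 1 (indices relative to site n). Then w satisfies w' = (w+1)( w₂(1/w₁+1)w − w(1/w₋₁+1)w₋₂ + w₁ − w₋₁ ). -/
/-!
Write `p_n = u_{n+2} + u_n`. The denominators in (e) are `D_n = 1 + p_n p_{n-1}`, and adding (e) at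
the sites `n + 2` and `n` closes up into an equation for `p` alone:
`p_n' = (p_{n+2} - p_n) / (D_{n+2} D_{n+1}) + (p_n - p_{n-2}) / (D_n D_{n-1})`.
Now `w_n = 1 / D_{n+1} - 1`, so `w_n + 1 = 1 / D_{n+1}`, `w_n = -p_{n+1} p_n / D_{n+1}` and
`1 / w_n + 1 = -1 / (p_{n+1} p_n)`. Substituting these, both sides of (wt) become rational functions
of `p_{n-2}, …, p_{n+3}`, and they agree.
-/

noncomputable section

def pairSum (u : ℤ → ℝ → ℝ) (n : ℤ) (t : ℝ) : ℝ := u (n + 2) t + u n t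

/-- The right-hand side of the lattice equation (e) at site `n`. -/
def eRhs (u : ℤ → ℝ → ℝ) (n : ℤ) (t : ℝ) : ℝ :=
  (u (n + 2) t - u (n - 2) t)
    / ((1 + (u (n + 2) t + u n t) * (u (n + 1) t + u (n - 1) t))
      * (1 + (u (n + 1) t + u (n - 1) t) * (u n t + u (n - 2) t)))

/-- The right-hand side of the equation for `p_n`, evaluated at `(p_{n-2}, …, p_{n+2})`. -/
def pFlow (a b c d e : ℝ) : ℝ :=
  (e - c) / ((1 + e * d) * (1 + d * c)) + (c - a) / ((1 + c * b) * (1 + b * a))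

def wSubst (x y : ℝ) : ℝ := 1 / (1 + x * y) - 1

/-- The right-hand side of (wt), evaluated at `(w_{n-2}, …, w_{n+2})`. -/
def wtRhs (wm2 wm1 w w1 w2 : ℝ) : ℝ :=
  (w + 1) * (w2 * (1 / w1 + 1) * w - w * (1 / wm1 + 1) * wm2 + w1 - wm1)

end

section wSubst

variable {x y : ℝ}

theorem wSubst_eq_zero_iff : wSubst x y = 0 ↔ x * y = 0 := by
  simp [wSubst, sub_eq_zero]

theorem wSubst_add_one : wSubst x y + 1 = 1 / (1 + x * y) :=
  sub_add_cancel _ _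

theorem wSubst_eq_neg_div (h : 1 + x * y ≠ 0) : wSubst x y = -(x * y) / (1 + x * y) := by
  rw [wSubst]
  field_simp
  ring

theorem one_div_wSubst_add_one (h : 1 + x * y ≠ 0) (hxy : x * y ≠ 0) :
    1 / wSubst x y + 1 = -1 / (x * y) := by
  obtain ⟨hx, hy⟩ := mul_ne_zero_iff.mp hxy
  rw [wSubst_eq_neg_div h]
  field_simp
  ring

theorem HasDerivAt.wSubst {f g : ℝ → ℝ} {f' g' t : ℝ} (hf : HasDerivAt f f' t)
    (hg : HasDerivAt g g' t) (h : 1 + f t * g t ≠ 0) :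
    HasDerivAt (fun s => wSubst (f s) (g s)) (-(f' * g t + f t * g') / (1 + f t * g t) ^ 2) t := by
  simp only [_root_.wSubst, one_div]
  exact (((hf.mul hg).const_add 1).inv h).sub_const 1

theorem wtRhs_wSubst {a b c d e f : ℝ} (hba : 1 + b * a ≠ 0) (hcb : 1 + c * b ≠ 0)
    (hdc : 1 + d * c ≠ 0) (hed : 1 + e * d ≠ 0) (hfe : 1 + f * e ≠ 0)
    (hcb₀ : c * b ≠ 0) (hed₀ : e * d ≠ 0) :
    wtRhs (wSubst b a) (wSubst c b) (wSubst d c) (wSubst e d) (wSubst f e)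
      = -(pFlow b c d e f * c + d * pFlow a b c d e) / (1 + d * c) ^ 2 := by
  rw [wtRhs, wSubst_add_one, one_div_wSubst_add_one hed hed₀, one_div_wSubst_add_one hcb hcb₀,
    wSubst_eq_neg_div hba, wSubst_eq_neg_div hcb, wSubst_eq_neg_div hdc, wSubst_eq_neg_div hed,
    wSubst_eq_neg_div hfe, pFlow, pFlow]
  obtain ⟨hc, hb⟩ := mul_ne_zero_iff.mp hcb₀
  obtain ⟨he, hd⟩ := mul_ne_zero_iff.mp hed₀
  -- `field_simp` reorders `1 + e * d` into `1 + d * e`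
  have hde : 1 + d * e ≠ 0 := by rwa [mul_comm]
  field_simp
  ring

end wSubst

theorem hasDerivAt_wtRhs_of_pFlow {p w : ℤ → ℝ → ℝ} {t : ℝ}
    (hD : ∀ m, 1 + p (m + 1) t * p m t ≠ 0)
    (hp : ∀ m, HasDerivAt (p m)
      (pFlow (p (m - 2) t) (p (m - 1) t) (p m t) (p (m + 1) t) (p (m + 2) t)) t)
    (hw : ∀ m s, w m s = wSubst (p (m + 1) s) (p m s)) (n : ℤ)
    (h1 : w (n + 1) t ≠ 0) (hm1 : w (n - 1) t ≠ 0) :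
    HasDerivAt (w n) (wtRhs (w (n - 2) t) (w (n - 1) t) (w n t) (w (n + 1) t) (w (n + 2) t)) t := by
  rw [funext (hw n)]
  convert (hp (n + 1)).wSubst (hp n) (hD n) using 1
  have hDm2 := hD (n - 2)
  have hDm1 := hD (n - 1)
  have hD1 := hD (n + 1)
  have hD2 := hD (n + 2)
  simp only [hw, ne_eq, wSubst_eq_zero_iff, show n - 2 + 1 = n - 1 by ring,
    show n - 1 + 1 = n by ring, show n + 1 + 1 = n + 2 by ring, show n + 2 + 1 = n + 3 by ring,
    show n + 1 - 1 = n by ring, show n + 1 - 2 = n - 1 by ring, show n + 1 + 2 = n + 3 by ring]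
    at h1 hm1 hDm2 hDm1 hD1 hD2 ⊢
  exact wtRhs_wSubst hDm2 hDm1 (hD n) hD1 hD2 hm1 h1

section pairSum

variable {u : ℤ → ℝ → ℝ}

theorem one_add_pairSum_mul_ne_zero
    (hden : ∀ n t, 1 + (u (n + 2) t + u n t) * (u (n + 1) t + u (n - 1) t) ≠ 0)
    (m : ℤ) (t : ℝ) : 1 + pairSum u (m + 1) t * pairSum u m t ≠ 0 := by
  have := hden (m + 1) t
  rwa [show m + 1 + 1 = m + 2 by ring, show m + 1 - 1 = m by ring] at this

theorem hasDerivAt_pairSum (hu : ∀ n t, HasDerivAt (u n) (eRhs u n t) t) (m : ℤ) (t : ℝ) :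
    HasDerivAt (pairSum u m) (pFlow (pairSum u (m - 2) t) (pairSum u (m - 1) t) (pairSum u m t)
      (pairSum u (m + 1) t) (pairSum u (m + 2) t)) t := by
  refine ((hu (m + 2) t).add (hu m t)).congr_deriv ?_
  simp only [eRhs, pFlow, pairSum, show m + 2 - 2 = m by ring, show m + 2 + 1 = m + 3 by ring,
    show m + 2 - 1 = m + 1 by ring, show m + 1 + 2 = m + 3 by ring,
    show m - 1 + 2 = m + 1 by ring, show m - 2 + 2 = m by ring]
  ring

theorem w_eq_wSubst_pairSum {w : ℤ → ℝ → ℝ}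
    (hw : ∀ n t, w n t = 1 / (1 + (u (n + 3) t + u (n + 1) t) * (u (n + 2) t + u n t)) - 1)
    (m : ℤ) (s : ℝ) : w m s = wSubst (pairSum u (m + 1) s) (pairSum u m s) := by
  rw [hw, wSubst, pairSum, pairSum, show m + 1 + 2 = m + 3 by ring]

end pairSum

/-- Substitution w = 1/(1+(u₃+u₁)(u₂+u)) − 1 maps solutions of lattice equation (e)
to solutions of the universal equation (wt). -/
theorem stmt12 (u : ℤ → ℝ → ℝ)
    (hden : ∀ (n : ℤ) (t : ℝ),
      1 + (u (n + 2) t + u n t) * (u (n + 1) t + u (n - 1) t) ≠ 0)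
    (hu : ∀ (n : ℤ) (t : ℝ), HasDerivAt (u n)
      ((u (n + 2) t - u (n - 2) t)
        / ((1 + (u (n + 2) t + u n t) * (u (n + 1) t + u (n - 1) t))
          * (1 + (u (n + 1) t + u (n - 1) t) * (u n t + u (n - 2) t)))) t)
    (w : ℤ → ℝ → ℝ)
    (hw : ∀ (n : ℤ) (t : ℝ), w n t =
      1 / (1 + (u (n + 3) t + u (n + 1) t) * (u (n + 2) t + u n t)) - 1)
    (n : ℤ) (t : ℝ) (h1 : w (n + 1) t ≠ 0) (hm1 : w (n - 1) t ≠ 0) :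
    HasDerivAt (w n)
      ((w n t + 1) * (w (n + 2) t * (1 / w (n + 1) t + 1) * w n t
        - w n t * (1 / w (n - 1) t + 1) * w (n - 2) t
        + w (n + 1) t - w (n - 1) t)) t :=
  hasDerivAt_wtRhs_of_pFlow (one_add_pairSum_mul_ne_zero hden · t) (hasDerivAt_pairSum hu · t)
    (w_eq_wSubst_pairSum hw) n h1 hm1
end

section
/- Let P(u₋₁,u,u₁,u₂) be affine-linear in each variable with the square symmetries P(u₋₁,u,u₁,u₂)=P(u₂,u₁,u,u₋₁)=P(u₁,u,u₋₁,u₂), and define h(u₋₁,u,u₁,u₂) := (∂P/∂u₋₁)(∂P/∂u₂) − (∂²P/∂u₋₁∂u₂)·P. Then h does not depend on u₋₁ and u₂ (i.e., ∂h/∂u₋₁ = ∂h/∂u₂ = 0 as polynomials), and the resulting polynomial H(u,u₁) := h is symmetric: H(u,u₁) = H(u₁,u), and is biquadratic (degree at most 2 in each of u, u₁). -/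
/-!
Affine-linearity in `u₋₁` and `u₂` (`∂₋₁² P = ∂₂² P = 0`) makes the derivatives of
`h = ∂₋₁P ∂₂P − ∂₋₁∂₂P · P` along `u₋₁` and `u₂` cancel by the Leibniz rule. The symmetry
`(u₋₁, u, u₁, u₂) ↦ (u₂, u₁, u, u₋₁)` of `P` maps `h` to itself, and since `h` involves neither `u₋₁`
nor `u₂`, this is the swap `u ↔ u₁`. Each of the two products in `h` has degree at most `1 + 1` in
every variable.
-/

open MvPolynomial

namespace MvPolynomial

variable {σ R : Type*} [CommRing R]

theorem pderiv_pderiv_comm (i j : σ) (p : MvPolynomial σ R) :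
    pderiv i (pderiv j p) = pderiv j (pderiv i p) := by
  classical
  ext m
  simp only [coeff_pderiv, Finsupp.add_apply, Finsupp.single_apply, add_right_comm m]
  rcases eq_or_ne i j with rfl | hij
  · rfl
  · simp only [hij, hij.symm, if_false, add_zero]
    ring

theorem degreeOf_pderiv_le (i k : σ) (p : MvPolynomial σ R) :
    (pderiv i p).degreeOf k ≤ p.degreeOf k := by
  refine degreeOf_le_iff.mpr fun m hm => ?_
  have hsupp : m + Finsupp.single i 1 ∈ p.support := by
    rw [mem_support_iff, coeff_pderiv] at hm
    exact mem_support_iff.mpr (left_ne_zero_of_mul hm)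
  calc m k ≤ (m + Finsupp.single i 1 : σ →₀ ℕ) k := by simp
    _ ≤ p.degreeOf k := monomial_le_degreeOf k hsupp

theorem pderiv_pderiv_self_eq_zero {i : σ} {p : MvPolynomial σ R} (hp : p.degreeOf i ≤ 1) :
    pderiv i (pderiv i p) = 0 := by
  ext m
  have hcoeff : coeff (m + Finsupp.single i 1 + Finsupp.single i 1) p = 0 := by
    refine notMem_support_iff.mp fun hm => ?_
    have := monomial_le_degreeOf i hm
    simp only [Finsupp.add_apply, Finsupp.single_eq_same] at this
    omega
  simp [coeff_pderiv, hcoeff]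

theorem notMem_vars_of_pderiv_eq_zero [NoZeroDivisors R] [CharZero R] {i : σ}
    {p : MvPolynomial σ R} (hp : pderiv i p = 0) : i ∉ p.vars := by
  rw [mem_vars_iff_mem_support]
  rintro ⟨d, hd, hdi⟩
  have hle : Finsupp.single i 1 ≤ d := Finsupp.single_le_iff.mpr (Nat.one_le_iff_ne_zero.mpr
    (Finsupp.mem_support_iff.mp hdi))
  have hcoeff := coeff_pderiv (i := i) p (d - Finsupp.single i 1)
  rw [hp, coeff_zero, tsub_add_cancel_of_le hle, eq_comm] at hcoeff
  exact mem_support_iff.mp hd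
    ((mul_eq_zero.mp hcoeff).resolve_right (Nat.cast_add_one_ne_zero _))

theorem rename_eq_self_of_forall_mem_vars {f : σ → σ} {p : MvPolynomial σ R}
    (hf : ∀ i ∈ p.vars, f i = i) : rename f p = p :=
  hom_congr_vars (f₁ := (rename f).toRingHom) (f₂ := RingHom.id _) (by ext; simp)
    (fun i hi _ => by simp [hf i hi]) rfl

noncomputable def pderivDiscr (i j : σ) (P : MvPolynomial σ R) : MvPolynomial σ R :=
  pderiv i P * pderiv j P - pderiv i (pderiv j P) * P

theorem pderivDiscr_comm (i j : σ) (P : MvPolynomial σ R) :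
    pderivDiscr i j P = pderivDiscr j i P := by
  rw [pderivDiscr, pderivDiscr, pderiv_pderiv_comm i j, mul_comm (pderiv i P)]

theorem pderiv_pderivDiscr_left {i : σ} (j : σ) {P : MvPolynomial σ R}
    (hi : pderiv i (pderiv i P) = 0) : pderiv i (pderivDiscr i j P) = 0 := by
  have hij : pderiv i (pderiv i (pderiv j P)) = 0 := by
    rw [pderiv_pderiv_comm i j, pderiv_pderiv_comm i j, hi, map_zero]
  rw [pderivDiscr, map_sub, pderiv_mul, pderiv_mul, hi, hij, pderiv_pderiv_comm i j]
  ring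

theorem pderiv_pderivDiscr_right (i : σ) {j : σ} {P : MvPolynomial σ R}
    (hj : pderiv j (pderiv j P) = 0) : pderiv j (pderivDiscr i j P) = 0 := by
  rw [pderivDiscr_comm]
  exact pderiv_pderivDiscr_left i hj

theorem rename_pderivDiscr {τ : Type*} {f : σ → τ} (hf : Function.Injective f) (i j : σ)
    (P : MvPolynomial σ R) :
    rename f (pderivDiscr i j P) = pderivDiscr (f i) (f j) (rename f P) := by
  simp only [pderivDiscr, map_sub, map_mul, pderiv_rename hf]

theorem degreeOf_pderivDiscr_le (i j : σ) {k : σ} {n : ℕ} {P : MvPolynomial σ R}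
    (hk : P.degreeOf k ≤ n) : (pderivDiscr i j P).degreeOf k ≤ 2 * n := by
  have hd (l : σ) (Q : MvPolynomial σ R) (hQ : Q.degreeOf k ≤ n) : (pderiv l Q).degreeOf k ≤ n :=
    (degreeOf_pderiv_le l k Q).trans hQ
  refine (degreeOf_sub_le k _ _).trans (max_le ?_ ?_) <;> refine (degreeOf_mul_le k _ _).trans ?_
  · linarith [hd i P hk, hd j P hk]
  · linarith [hd i _ (hd j P hk)]

end MvPolynomial

theorem stmt18_general {K : Type*} [Field K] [CharZero K]
    (P : MvPolynomial (Fin 4) K)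
    (hlin : ∀ i, P.degreeOf i ≤ 1)
    (hs1 : rename (![3, 2, 1, 0] : Fin 4 → Fin 4) P = P)
    (h : MvPolynomial (Fin 4) K)
    (hh : h = pderiv 0 P * pderiv 3 P - pderiv 0 (pderiv 3 P) * P) :
    pderiv 0 h = 0 ∧ pderiv 3 h = 0 ∧
    rename (Equiv.swap (1 : Fin 4) 2 : Fin 4 → Fin 4) h = h ∧
    h.degreeOf 1 ≤ 2 ∧ h.degreeOf 2 ≤ 2 := by
  obtain rfl : h = pderivDiscr 0 3 P := hh
  have h0 := pderiv_pderivDiscr_left 3 (pderiv_pderiv_self_eq_zero (hlin 0))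
  have h3 := pderiv_pderivDiscr_right 0 (pderiv_pderiv_self_eq_zero (hlin 3))
  refine ⟨h0, h3, ?_, degreeOf_pderivDiscr_le 0 3 (hlin 1), degreeOf_pderivDiscr_le 0 3 (hlin 2)⟩
  have hflip : rename (![3, 2, 1, 0] : Fin 4 → Fin 4) (pderivDiscr 0 3 P) = pderivDiscr 0 3 P := by
    rw [rename_pderivDiscr (by decide), hs1, pderivDiscr_comm]
    rfl
  have hfix : ∀ i ∈ (pderivDiscr 0 3 P).vars, Equiv.swap (0 : Fin 4) 3 i = i := fun i hi =>
    Equiv.swap_apply_of_ne_of_ne (by rintro rfl; exact notMem_vars_of_pderiv_eq_zero h0 hi)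
      (by rintro rfl; exact notMem_vars_of_pderiv_eq_zero h3 hi)
  have hswap : (Equiv.swap (1 : Fin 4) 2 : Fin 4 → Fin 4)
      = Equiv.swap (0 : Fin 4) 3 ∘ ![3, 2, 1, 0] := by decide
  rw [hswap, ← rename_rename, hflip, rename_eq_self_of_forall_mem_vars hfix]

/-- From a square-symmetric affine-linear polynomial P, the combination
h = ∂₋₁(P)·∂₂(P) − ∂₋₁∂₂(P)·P does not depend on u₋₁ = X 0 and u₂ = X 3, and
defines a symmetric biquadratic polynomial H(u,u₁) in u = X 1, u₁ = X 2. -/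
theorem stmt18 {K : Type*} [Field K] [CharZero K]
    (P : MvPolynomial (Fin 4) K)
    (hlin : ∀ i, P.degreeOf i ≤ 1)
    (hs1 : rename (![3, 2, 1, 0] : Fin 4 → Fin 4) P = P)
    (hs2 : rename (![2, 1, 0, 3] : Fin 4 → Fin 4) P = P)
    (h : MvPolynomial (Fin 4) K)
    (hh : h = pderiv 0 P * pderiv 3 P - pderiv 0 (pderiv 3 P) * P) :
    pderiv 0 h = 0 ∧ pderiv 3 h = 0 ∧
    rename (Equiv.swap (1 : Fin 4) 2 : Fin 4 → Fin 4) h = h ∧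
    h.degreeOf 1 ≤ 2 ∧ h.degreeOf 2 ≤ 2 :=
  stmt18_general P hlin hs1 h hh
end
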